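/- arXiv:2605.10805 — 2 statements merged into one kernel-verified Lean document; each statement's English description precedes it below -/
import Mathlib

section
/- Let n ≥ 1, let ρ_n be a probability mass function on Fin n with ρ_n(i) > 0 for all i, let f : Fin n → ℝ, and let δ > 0. Then the maximum of ρ̃ ↦ ∑_i ρ̃(i) f(i) over the KL uncertainty set U(ρ_n, δ) is attained; moreover, if ρ̃* is a maximizer such that ρ̃*(i) > 0 for all i, the KL constraint is active at ρ̃* (i.e. ∑_i ρ̃*(i) log(ρ̃*(i)/ρ_n(i)) = δ), and f is not constant on Fin n, then there exist τ > 0 and s̄ ∈ ℝ such that ρ̃*(i) = ρ_n(i) · exp((f(i) − s̄)/τ) for every i, and this s̄ satisfies s̄ ≥ ∑_i ρ_n(i) f(i). -/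
open Finset Real Filter Topology

/-!
The feasible set is a closed subset of the standard simplex, so the linear objective attains its
maximum on it. Let `ρ̃` be a positive maximizer with active constraint and `ℓ = log (ρ̃ / ρ)`, the
gradient of the divergence up to a constant. Moving from `ρ̃` along a direction `v` with `∑ v = 0`
and `v ⬝ᵥ ℓ < 0` decreases the divergence to first order, so small steps stay feasible, and
maximality forces `v ⬝ᵥ f ≤ 0`. A Farkas-type argument on the hyperplane `∑ v = 0` turns this into
`f = τ ℓ + s̄` with `τ ≥ 0`; non-constancy of `f` gives `τ > 0`, and Gibbs' inequality
`∑ ρ ℓ ≤ 0` gives `s̄ ≥ ∑ ρ f`.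
-/

variable {ι : Type*} [Fintype ι]

noncomputable def klDivergence (p q : ι → ℝ) : ℝ := ∑ i, p i * log (p i / q i)

def klBall (q : ι → ℝ) (δ : ℝ) : Set (ι → ℝ) := stdSimplex ℝ ι ∩ {p | klDivergence p q ≤ δ}

theorem klDivergence_self (q : ι → ℝ) : klDivergence q q = 0 :=
  sum_eq_zero fun i _ => by rcases eq_or_ne (q i) 0 with h | h <;> simp [h]

theorem mem_klBall_self {q : ι → ℝ} {δ : ℝ} (hq : q ∈ stdSimplex ℝ ι) (hδ : 0 ≤ δ) :
    q ∈ klBall q δ :=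
  ⟨hq, by simpa [klDivergence_self] using hδ⟩

theorem continuous_mul_log_div (c : ℝ) : Continuous fun x : ℝ => x * log (x / c) := by
  rcases eq_or_ne c 0 with rfl | hc
  · simpa using continuous_const
  · have : (fun x : ℝ => x * log (x / c)) = fun x => c * ((x / c) * log (x / c)) := by
      ext x; field_simp
    rw [this]
    exact continuous_const.mul (continuous_mul_log.comp (continuous_id.div_const c))

theorem continuous_klDivergence (q : ι → ℝ) : Continuous fun p : ι → ℝ => klDivergence p q :=
  continuous_finsetSum _ fun i _ => (continuous_mul_log_div (q i)).comp (continuous_apply i)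

theorem isCompact_klBall (q : ι → ℝ) (δ : ℝ) : IsCompact (klBall q δ) :=
  (isCompact_stdSimplex ℝ ι).inter_right
    (isClosed_le (continuous_klDivergence q) continuous_const)

theorem klDivergence_nonneg {p q : ι → ℝ} (hp : ∀ i, 0 < p i) (hq : ∀ i, 0 < q i)
    (hpq : ∑ i, p i = ∑ i, q i) : 0 ≤ klDivergence p q := by
  have hterm : ∀ i, p i - q i ≤ p i * log (p i / q i) := fun i => by
    have := one_sub_inv_le_log_of_pos (div_pos (hp i) (hq i))
    rw [inv_div] at this
    have h := mul_le_mul_of_nonneg_left this (hp i).le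
    rwa [mul_sub, mul_one, mul_div_cancel₀ _ (hp i).ne'] at h
  calc (0 : ℝ) = ∑ i, (p i - q i) := by rw [sum_sub_distrib, hpq, sub_self]
    _ ≤ klDivergence p q := sum_le_sum fun i _ => hterm i

theorem klDivergence_eq_neg_sum_mul_log_div (p q : ι → ℝ) :
    klDivergence q p = -∑ i, q i * log (p i / q i) := by
  simp only [klDivergence, ← sum_neg_distrib, ← mul_neg, ← log_inv, inv_div]

theorem exists_log_div_lt_log_div {p q : ι → ℝ} (hp : ∀ i, 0 < p i) (hq : ∀ i, 0 < q i)
    (hpq : ∑ i, p i = ∑ i, q i) (hne : klDivergence p q ≠ 0) :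
    ∃ a b, log (p b / q b) < log (p a / q a) := by
  obtain ⟨i₀, -, -⟩ := exists_ne_zero_of_sum_ne_zero hne
  by_contra! hconst
  set c := log (p i₀ / q i₀)
  have hℓ : ∀ i, log (p i / q i) = c := fun i => le_antisymm (hconst i i₀) (hconst i₀ i)
  -- Gibbs' inequality in both directions forces `c = 0`.
  have hKLpq : klDivergence p q = c * ∑ i, q i := by
    simp [klDivergence, hℓ, ← sum_mul, hpq, mul_comm]
  have hKLqp : klDivergence q p = -(c * ∑ i, q i) := by
    simp [klDivergence_eq_neg_sum_mul_log_div, hℓ, ← sum_mul, mul_comm]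
  have h1 := klDivergence_nonneg hp hq hpq
  have h2 := klDivergence_nonneg hq hp hpq.symm
  exact hne (by linarith)

theorem hasDerivAt_mul_log_div {x c : ℝ} (hx : x ≠ 0) (hc : c ≠ 0) :
    HasDerivAt (fun y => y * log (y / c)) (log (x / c) + 1) x :=
  ((hasDerivAt_id' x).fun_mul
    (((hasDerivAt_id' x).div_const c).log (div_ne_zero hx hc))).congr_deriv (by field_simp)

theorem hasDerivAt_klDivergence_add_smul {p q : ι → ℝ} (hp : ∀ i, p i ≠ 0)
    (hq : ∀ i, q i ≠ 0) (v : ι → ℝ) :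
    HasDerivAt (fun t : ℝ => klDivergence (p + t • v) q)
      (∑ i, v i * (log (p i / q i) + 1)) 0 := by
  refine HasDerivAt.fun_sum fun i _ => ?_
  have hline : HasDerivAt (fun t : ℝ => p i + t * v i) (v i) 0 := by
    simpa using ((hasDerivAt_id (0 : ℝ)).mul_const (v i)).const_add (p i)
  simpa [mul_comm, Function.comp_def] using
    HasDerivAt.comp_of_eq 0 (hasDerivAt_mul_log_div (hp i) (hq i)) hline (by simp)

theorem dotProduct_nonpos_of_isMaxOn_klBall {q p f v : ι → ℝ} {δ : ℝ} (hq : ∀ i, q i ≠ 0)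
    (hp : ∀ i, 0 < p i) (hp_sum : ∑ i, p i = 1) (hact : klDivergence p q = δ)
    (hmax : IsMaxOn (· ⬝ᵥ f) (klBall q δ) p) (hv : ∑ i, v i = 0)
    (hvℓ : v ⬝ᵥ (fun i => log (p i / q i)) < 0) : v ⬝ᵥ f ≤ 0 := by
  set φ : ℝ → ℝ := fun t => klDivergence (p + t • v) q
  have hφ0 : φ 0 = δ := by simp [φ, hact]
  have hslope : ∀ᶠ t in 𝓝[>] 0, slope φ 0 t < 0 := by
    refine (hasDerivAt_klDivergence_add_smul (fun i => (hp i).ne') hq v).hasDerivWithinAt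
      |>.limsup_slope_le' (s := Set.Ioi 0) (by simp) ?_
    simpa [mul_add, sum_add_distrib, hv, dotProduct] using hvℓ
  have hpos : ∀ᶠ t in 𝓝[>] (0 : ℝ), ∀ i, 0 < p i + t * v i := by
    refine nhdsWithin_le_nhds (eventually_all.2 fun i => ?_)
    have : Tendsto (fun t : ℝ => p i + t * v i) (𝓝 0) (𝓝 (p i)) := by
      simpa using ((continuous_mul_const (v i)).const_add (p i)).tendsto (0 : ℝ)
    exact this.eventually (eventually_gt_nhds (hp i))
  obtain ⟨t, ht_slope, ht_pos, ht⟩ := (hslope.and (hpos.and self_mem_nhdsWithin)).exists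
  have hφt : φ t < δ := by
    rw [slope_def_field, div_lt_iff₀ (sub_pos.2 ht), zero_mul] at ht_slope
    linarith
  have hfeas : p + t • v ∈ klBall q δ :=
    ⟨⟨fun i => (ht_pos i).le, by simp [sum_add_distrib, ← mul_sum, hv, hp_sum]⟩,
      hφt.le⟩
  have := isMaxOn_iff.1 hmax _ hfeas
  rw [add_dotProduct, smul_dotProduct, smul_eq_mul, add_le_iff_nonpos_right] at this
  exact nonpos_of_mul_nonpos_right this ht

theorem exists_eq_mul_add_of_dotProduct_nonpos {f ℓ : ι → ℝ} {a b : ι} (hab : ℓ b < ℓ a)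
    (h : ∀ v : ι → ℝ, ∑ i, v i = 0 → v ⬝ᵥ ℓ < 0 → v ⬝ᵥ f ≤ 0) :
    ∃ τ s, 0 ≤ τ ∧ ∀ i, f i = τ * ℓ i + s := by
  classical
  set e : ι → ι → ι → ℝ := fun i j => Pi.single i 1 - Pi.single j 1
  have he_sum : ∀ i j, ∑ k, e i j k = 0 := fun i j => by simp [e, sum_sub_distrib]
  have he : ∀ i j z, e i j ⬝ᵥ z = z i - z j := fun i j z => by simp [e, sub_dotProduct]
  have hd : 0 < ℓ a - ℓ b := sub_pos.2 hab
  have hfab : 0 ≤ f a - f b := by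
    have := h (e b a) (he_sum b a) (by rw [he]; linarith)
    rw [he] at this
    linarith
  -- `(ℓ a - ℓ b) e_ij - (ℓ i - ℓ j) e_ab` is orthogonal to `1` and `ℓ`; the extra `-ε e_ab` makes
  -- its pairing with `ℓ` negative, and `ε → 0` followed by swapping `i, j` gives equality below.
  have key : ∀ i j, (ℓ a - ℓ b) * (f i - f j) - (ℓ i - ℓ j) * (f a - f b) ≤ 0 := by
    intro i j
    set X := (ℓ a - ℓ b) * (f i - f j) - (ℓ i - ℓ j) * (f a - f b)
    have hε : ∀ ε > 0, X - ε * (f a - f b) ≤ 0 := by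
      intro ε hε
      set w := (ℓ a - ℓ b) • e i j - (ℓ i - ℓ j + ε) • e a b
      have := h w (by simp [w, sum_sub_distrib, ← mul_sum, he_sum])
        (by simp only [w, sub_dotProduct, smul_dotProduct, he, smul_eq_mul]; nlinarith)
      simp only [w, sub_dotProduct, smul_dotProduct, he, smul_eq_mul] at this
      linarith
    have hlim : Tendsto (fun ε : ℝ => X - ε * (f a - f b)) (𝓝[>] 0) (𝓝 X) := by
      simpa using (tendsto_const_nhds.sub (tendsto_id.mul_const (f a - f b))).mono_left
        (nhdsWithin_le_nhds (a := (0 : ℝ)))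
    exact le_of_tendsto hlim (eventually_nhdsWithin_of_forall hε)
  refine ⟨(f a - f b) / (ℓ a - ℓ b), f b - (f a - f b) / (ℓ a - ℓ b) * ℓ b,
    div_nonneg hfab hd.le, fun i => ?_⟩
  have h1 := key i b
  have h2 := key b i
  field_simp
  linarith

theorem exists_eq_mul_exp_of_isMaxOn_klBall {q p f : ι → ℝ} {δ : ℝ} (hq : ∀ i, 0 < q i)
    (hq_sum : ∑ i, q i = 1) (hp : ∀ i, 0 < p i) (hp_sum : ∑ i, p i = 1) (hδ : 0 < δ)
    (hact : klDivergence p q = δ) (hmax : IsMaxOn (· ⬝ᵥ f) (klBall q δ) p)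
    (hf : ¬ ∃ k, ∀ i, f i = k) :
    ∃ τ s, 0 < τ ∧ (∀ i, p i = q i * exp ((f i - s) / τ)) ∧ q ⬝ᵥ f ≤ s := by
  obtain ⟨a, b, hab⟩ := exists_log_div_lt_log_div hp hq (hp_sum.trans hq_sum.symm)
    (hact.trans_ne hδ.ne')
  obtain ⟨τ, s, hτ, hfℓ⟩ := exists_eq_mul_add_of_dotProduct_nonpos
    (ℓ := fun i => log (p i / q i)) hab fun v hv hvℓ =>
      dotProduct_nonpos_of_isMaxOn_klBall (fun i => (hq i).ne') hp hp_sum hact hmax hv hvℓ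
  have hτ : 0 < τ := hτ.lt_of_ne' fun h0 => hf ⟨s, by simpa [h0] using hfℓ⟩
  refine ⟨τ, s, hτ, fun i => ?_, ?_⟩
  · rw [hfℓ i, add_sub_cancel_right, mul_div_cancel_left₀ _ hτ.ne',
      exp_log (div_pos (hp i) (hq i)), mul_div_cancel₀ _ (hq i).ne']
  · have hqf : q ⬝ᵥ f = τ * ∑ i, q i * log (p i / q i) + s := by
      rw [dotProduct, mul_sum, ← mul_one s, ← hq_sum, mul_sum, ← sum_add_distrib]
      exact sum_congr rfl fun i _ => by rw [hfℓ]; ring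
    have hgibbs := klDivergence_nonneg hq hp (hq_sum.trans hp_sum.symm)
    rw [klDivergence_eq_neg_sum_mul_log_div, neg_nonneg] at hgibbs
    rw [hqf, add_le_iff_nonpos_left]
    exact mul_nonpos_of_nonneg_of_nonpos hτ.le hgibbs

theorem kl_uncertainty_max_general (n : ℕ) (ρn : Fin n → ℝ)
    (hρ_pos : ∀ i, 0 < ρn i) (hρ_sum : ∑ i, ρn i = 1)
    (f : Fin n → ℝ) (δ : ℝ) (hδ : 0 < δ) :
    ((∃ ρmax : Fin n → ℝ,
        ((∀ i, 0 ≤ ρmax i) ∧ (∑ i, ρmax i = 1) ∧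
          ∑ i, ρmax i * Real.log (ρmax i / ρn i) ≤ δ) ∧
        (∀ ρ' : Fin n → ℝ,
          (∀ i, 0 ≤ ρ' i) → (∑ i, ρ' i = 1) →
          (∑ i, ρ' i * Real.log (ρ' i / ρn i) ≤ δ) →
          ∑ i, ρ' i * f i ≤ ∑ i, ρmax i * f i)) ∧
      (∀ ρstar : Fin n → ℝ,
        (∀ i, 0 < ρstar i) → (∑ i, ρstar i = 1) →
        (∑ i, ρstar i * Real.log (ρstar i / ρn i) ≤ δ) →
        (∀ ρ' : Fin n → ℝ,
          (∀ i, 0 ≤ ρ' i) → (∑ i, ρ' i = 1) →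
          (∑ i, ρ' i * Real.log (ρ' i / ρn i) ≤ δ) →
          ∑ i, ρ' i * f i ≤ ∑ i, ρstar i * f i) →
        (∑ i, ρstar i * Real.log (ρstar i / ρn i) = δ) →
        (¬ ∃ k : ℝ, ∀ i, f i = k) →
        ∃ τ s : ℝ, 0 < τ ∧
          (∀ i, ρstar i = ρn i * Real.exp ((f i - s) / τ)) ∧
          (∑ i, ρn i * f i) ≤ s)) := by
  have hρ : ρn ∈ stdSimplex ℝ (Fin n) := ⟨fun i => (hρ_pos i).le, hρ_sum⟩
  refine ⟨?_, fun ρstar hpos hsum _ hmax hact hf => ?_⟩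
  · obtain ⟨ρmax, hmem, hmaxOn⟩ := (isCompact_klBall ρn δ).exists_isMaxOn
      ⟨ρn, mem_klBall_self hρ hδ.le⟩ (continuous_id.dotProduct continuous_const).continuousOn
    exact ⟨ρmax, ⟨hmem.1.1, hmem.1.2, hmem.2⟩,
      fun ρ' h0 h1 hkl => isMaxOn_iff.1 hmaxOn ρ' ⟨⟨h0, h1⟩, hkl⟩⟩
  · exact exists_eq_mul_exp_of_isMaxOn_klBall hρ_pos hρ_sum hpos hsum hδ hact
      (isMaxOn_iff.2 fun ρ' h => hmax ρ' h.1.1 h.1.2 h.2) hf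

/-- existence of a maximizer of the linear objective over the KL
uncertainty set, and the exponential-tilting form of any interior maximizer at
which the KL constraint is active (for non-constant `f`), with baseline bound
`s̄ ≥ ∑ i, ρn i * f i`. Here `ρ̃ i * log (ρ̃ i / ρn i)` is `0` when `ρ̃ i = 0`
(recall `Real.log 0 = 0`). -/
theorem kl_uncertainty_max (n : ℕ) (hn : 1 ≤ n) (ρn : Fin n → ℝ)
    (hρ_pos : ∀ i, 0 < ρn i) (hρ_sum : ∑ i, ρn i = 1)
    (f : Fin n → ℝ) (δ : ℝ) (hδ : 0 < δ) :
    ((∃ ρmax : Fin n → ℝ,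
        ((∀ i, 0 ≤ ρmax i) ∧ (∑ i, ρmax i = 1) ∧
          ∑ i, ρmax i * Real.log (ρmax i / ρn i) ≤ δ) ∧
        (∀ ρ' : Fin n → ℝ,
          (∀ i, 0 ≤ ρ' i) → (∑ i, ρ' i = 1) →
          (∑ i, ρ' i * Real.log (ρ' i / ρn i) ≤ δ) →
          ∑ i, ρ' i * f i ≤ ∑ i, ρmax i * f i)) ∧
      (∀ ρstar : Fin n → ℝ,
        (∀ i, 0 < ρstar i) → (∑ i, ρstar i = 1) →
        (∑ i, ρstar i * Real.log (ρstar i / ρn i) ≤ δ) →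
        (∀ ρ' : Fin n → ℝ,
          (∀ i, 0 ≤ ρ' i) → (∑ i, ρ' i = 1) →
          (∑ i, ρ' i * Real.log (ρ' i / ρn i) ≤ δ) →
          ∑ i, ρ' i * f i ≤ ∑ i, ρstar i * f i) →
        (∑ i, ρstar i * Real.log (ρstar i / ρn i) = δ) →
        (¬ ∃ k : ℝ, ∀ i, f i = k) →
        ∃ τ s : ℝ, 0 < τ ∧
          (∀ i, ρstar i = ρn i * Real.exp ((f i - s) / τ)) ∧
          (∑ i, ρn i * f i) ≤ s)) :=
  kl_uncertainty_max_general n ρn hρ_pos hρ_sum f δ hδ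
end

section
/- Suppose there exist constants M > 0 and K > 0 such that 0 ≤ c(z,a) ≤ M for all z ∈ Z, a ∈ {0,1}, and 0 ≤ w2(z) ≤ K for all z ∈ Z. Then for every λ ∈ ℝ the second derivative of the dual function satisfies β ≤ d″(λ) ≤ β + M²K²/β; in particular, d is β-strongly convex and its derivative d′ is Lipschitz continuous with constant β + M²K²/β. -/
open Finset

/-- `q_λ(z,a) = w1(z) r(z,a) − λ w2(z) c(z,a)`. -/
noncomputable def qfun {Z : Type*} (r c : Z → Bool → ℝ) (w1 w2 : Z → ℝ)
    (lam : ℝ) (z : Z) (a : Bool) : ℝ :=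
  w1 z * r z a - lam * (w2 z * c z a)

/-- Partition function `Q(z,λ) = ∑_a exp(q_λ(z,a)/β)`. -/
noncomputable def Qpart {Z : Type*} (r c : Z → Bool → ℝ) (w1 w2 : Z → ℝ)
    (β lam : ℝ) (z : Z) : ℝ :=
  ∑ a, Real.exp (qfun r c w1 w2 lam z a / β)

/-- The dual function `d(λ) = β ∑_z ρ(z) log Q(z,λ) + λ C + (β/2) λ²`. -/
noncomputable def dualFun {Z : Type*} [Fintype Z] (ρ : Z → ℝ)
    (r c : Z → Bool → ℝ) (w1 w2 : Z → ℝ) (β C lam : ℝ) : ℝ :=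
  β * ∑ z, ρ z * Real.log (Qpart r c w1 w2 β lam z) + lam * C + β * lam ^ 2 / 2

/-! Each `log Q(z, ·)` is the log-partition function of a Gibbs family whose exponent is affine
in `λ` with slope `b = -w2 c / β`, so its first two derivatives are the Gibbs mean and variance
of `b`. The variance is nonnegative by Cauchy–Schwarz and at most the second moment, hence at
most `(MK/β)²`. Averaging over `ρ` and adding the `β` coming from `βλ²/2` gives
`β ≤ d'' ≤ β + M²K²/β`; strong convexity and the Lipschitz bound on `d'` follow from these
bounds by the second-derivative test and the mean value theorem. -/

open Real

theorem strongConvexOn_univ_of_hasDerivAt2 {f f' f'' : ℝ → ℝ} {m : ℝ}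
    (hf : ∀ x, HasDerivAt f (f' x) x) (hf' : ∀ x, HasDerivAt f' (f'' x) x)
    (hm : ∀ x, m ≤ f'' x) : StrongConvexOn Set.univ m f := by
  rw [strongConvexOn_iff_convex]
  simp only [Real.norm_eq_abs, sq_abs]
  refine convexOn_of_hasDerivWithinAt2_nonneg convex_univ (f' := fun x => f' x - m * x)
    (f'' := fun x => f'' x - m) ?_ (fun x _ => ?_) (fun x _ => ?_) (fun x _ => sub_nonneg.2 (hm x))
  · exact (continuous_iff_continuousAt.2 fun x => (hf x).continuousAt).continuousOn.sub (by fun_prop)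
  · refine ((hf x).sub (((hasDerivAt_pow 2 x).const_mul (m / 2)))).hasDerivWithinAt.congr_deriv ?_
    push_cast; ring
  · exact ((hf' x).sub ((hasDerivAt_id x).const_mul m)).hasDerivWithinAt.congr_deriv (by simp)

theorem abs_sub_le_of_hasDerivAt_abs_le {g g' : ℝ → ℝ} {L : ℝ}
    (hg : ∀ x, HasDerivAt g (g' x) x) (hL : ∀ x, |g' x| ≤ L) (x y : ℝ) :
    |g x - g y| ≤ L * |x - y| :=
  Convex.norm_image_sub_le_of_norm_hasDerivWithin_le (fun z _ => (hg z).hasDerivWithinAt)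
    (fun z _ => hL z) convex_univ (Set.mem_univ y) (Set.mem_univ x)

section ExpMoment

variable {ι : Type*} [Fintype ι] (α b : ι → ℝ)

noncomputable def expMoment (k : ℕ) (t : ℝ) : ℝ :=
  ∑ i, b i ^ k * exp (α i + t * b i)

noncomputable def gibbsMean (t : ℝ) : ℝ :=
  expMoment α b 1 t / expMoment α b 0 t

noncomputable def gibbsVar (t : ℝ) : ℝ :=
  expMoment α b 2 t / expMoment α b 0 t - gibbsMean α b t ^ 2

theorem hasDerivAt_expMoment (k : ℕ) (t : ℝ) :
    HasDerivAt (expMoment α b k) (expMoment α b (k + 1) t) t :=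
  HasDerivAt.fun_sum fun i _ =>
    (((hasDerivAt_mul_const (b i)).const_add (α i)).exp.const_mul (b i ^ k)).congr_deriv (by ring)

theorem expMoment_zero_pos [Nonempty ι] (t : ℝ) : 0 < expMoment α b 0 t :=
  sum_pos (fun i _ => by simpa using exp_pos _) univ_nonempty

theorem hasDerivAt_log_expMoment_zero [Nonempty ι] (t : ℝ) :
    HasDerivAt (fun s => log (expMoment α b 0 s)) (gibbsMean α b t) t :=
  (hasDerivAt_expMoment α b 0 t).log (expMoment_zero_pos α b t).ne'

theorem hasDerivAt_gibbsMean [Nonempty ι] (t : ℝ) :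
    HasDerivAt (gibbsMean α b) (gibbsVar α b t) t := by
  have h0 := (expMoment_zero_pos α b t).ne'
  refine HasDerivAt.congr_deriv (f := gibbsMean α b)
    ((hasDerivAt_expMoment α b 1 t).div (hasDerivAt_expMoment α b 0 t) h0) ?_
  simp only [gibbsVar, gibbsMean]
  field_simp

theorem expMoment_one_sq_le (t : ℝ) :
    expMoment α b 1 t ^ 2 ≤ expMoment α b 0 t * expMoment α b 2 t :=
  sum_sq_le_sum_mul_sum_of_sq_le_mul _ (fun i _ => by positivity) (fun i _ => by positivity)
    (fun i _ => le_of_eq (by ring))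

theorem expMoment_two_le {B : ℝ} (hB : ∀ i, |b i| ≤ B) (t : ℝ) :
    expMoment α b 2 t ≤ B ^ 2 * expMoment α b 0 t := by
  rw [expMoment, expMoment, mul_sum]
  refine sum_le_sum fun i _ => ?_
  rw [pow_zero, one_mul]
  exact mul_le_mul_of_nonneg_right (sq_le_sq' (abs_le.1 (hB i)).1 (abs_le.1 (hB i)).2) (exp_pos _).le

theorem gibbsVar_nonneg [Nonempty ι] (t : ℝ) : 0 ≤ gibbsVar α b t := by
  have h0 := expMoment_zero_pos α b t
  rw [gibbsVar, gibbsMean, div_pow, sub_nonneg, div_le_div_iff₀ (by positivity) h0]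
  nlinarith [expMoment_one_sq_le α b t]

theorem gibbsVar_le [Nonempty ι] {B : ℝ} (hB : ∀ i, |b i| ≤ B) (t : ℝ) :
    gibbsVar α b t ≤ B ^ 2 := by
  calc gibbsVar α b t ≤ expMoment α b 2 t / expMoment α b 0 t :=
        sub_le_self _ (sq_nonneg _)
    _ ≤ B ^ 2 := (div_le_iff₀ (expMoment_zero_pos α b t)).2 (expMoment_two_le α b hB t)

end ExpMoment

section Dual

variable {Z : Type*} (r c : Z → Bool → ℝ) (w1 w2 : Z → ℝ) (β : ℝ)

noncomputable def qIntercept (z : Z) (a : Bool) : ℝ :=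
  w1 z * r z a / β

noncomputable def qSlope (z : Z) (a : Bool) : ℝ :=
  -(w2 z * c z a) / β

theorem Qpart_eq_expMoment (lam : ℝ) (z : Z) :
    Qpart r c w1 w2 β lam z = expMoment (qIntercept r w1 β z) (qSlope c w2 β z) 0 lam := by
  refine sum_congr rfl fun a _ => ?_
  rw [pow_zero, one_mul, qfun, qIntercept, qSlope]
  congr 1
  ring

theorem abs_qSlope_le {M K : ℝ} (hβ : 0 < β) (hw2 : ∀ z, 0 ≤ w2 z) (hw2_bound : ∀ z, w2 z ≤ K)
    (hc_bound : ∀ z a, 0 ≤ c z a ∧ c z a ≤ M) (z : Z) (a : Bool) :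
    |qSlope c w2 β z a| ≤ M * K / β := by
  have hprod : w2 z * c z a ≤ M * K := by
    rw [mul_comm M]
    exact mul_le_mul (hw2_bound z) (hc_bound z a).2 (hc_bound z a).1 ((hw2 z).trans (hw2_bound z))
  rw [qSlope, abs_div, abs_neg, abs_of_pos hβ, abs_of_nonneg (mul_nonneg (hw2 z) (hc_bound z a).1)]
  exact div_le_div_of_nonneg_right hprod hβ.le

variable [Fintype Z] (ρ : Z → ℝ) (C : ℝ)

noncomputable def dualDeriv (lam : ℝ) : ℝ :=
  β * ∑ z, ρ z * gibbsMean (qIntercept r w1 β z) (qSlope c w2 β z) lam + C + β * lam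

noncomputable def dualDeriv2 (lam : ℝ) : ℝ :=
  β * ∑ z, ρ z * gibbsVar (qIntercept r w1 β z) (qSlope c w2 β z) lam + β

theorem hasDerivAt_dualFun (lam : ℝ) :
    HasDerivAt (dualFun ρ r c w1 w2 β C) (dualDeriv r c w1 w2 β ρ C lam) lam := by
  have hlog : ∀ z, HasDerivAt (fun l => log (Qpart r c w1 w2 β l z))
      (gibbsMean (qIntercept r w1 β z) (qSlope c w2 β z) lam) lam := fun z => by
    simpa only [Qpart_eq_expMoment] using hasDerivAt_log_expMoment_zero _ _ lam
  have hsum := HasDerivAt.fun_sum (u := univ) fun z _ => (hlog z).const_mul (ρ z)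
  refine ((hsum.const_mul β).add (hasDerivAt_mul_const C)).add
    (((hasDerivAt_pow 2 lam).const_mul β).div_const 2) |>.congr_deriv ?_
  simp only [dualDeriv]
  ring

theorem hasDerivAt_dualDeriv (lam : ℝ) :
    HasDerivAt (dualDeriv r c w1 w2 β ρ C) (dualDeriv2 r c w1 w2 β ρ lam) lam := by
  have hsum := HasDerivAt.fun_sum (u := univ) fun z _ =>
    (hasDerivAt_gibbsMean (qIntercept r w1 β z) (qSlope c w2 β z) lam).const_mul (ρ z)
  exact (((hsum.const_mul β).add_const C).add ((hasDerivAt_id lam).const_mul β)).congr_deriv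
    (by simp [dualDeriv2])

theorem le_dualDeriv2 (hρ : ∀ z, 0 ≤ ρ z) (hβ : 0 ≤ β) (lam : ℝ) :
    β ≤ dualDeriv2 r c w1 w2 β ρ lam :=
  le_add_of_nonneg_left <| mul_nonneg hβ <|
    sum_nonneg fun z _ => mul_nonneg (hρ z) (gibbsVar_nonneg _ _ lam)

theorem dualDeriv2_le {M K : ℝ} (hρ : ∀ z, 0 ≤ ρ z) (hρ_sum : ∑ z, ρ z = 1) (hβ : 0 < β)
    (hw2 : ∀ z, 0 ≤ w2 z) (hw2_bound : ∀ z, w2 z ≤ K) (hc_bound : ∀ z a, 0 ≤ c z a ∧ c z a ≤ M)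
    (lam : ℝ) : dualDeriv2 r c w1 w2 β ρ lam ≤ β + M ^ 2 * K ^ 2 / β :=
  calc dualDeriv2 r c w1 w2 β ρ lam ≤ β * ∑ z, ρ z * (M * K / β) ^ 2 + β := by
        unfold dualDeriv2
        gcongr with z
        · exact hρ z
        · exact gibbsVar_le _ _ (abs_qSlope_le c w2 β hβ hw2 hw2_bound hc_bound z) lam
    _ = β + M ^ 2 * K ^ 2 / β := by
        rw [← sum_mul, hρ_sum]
        field_simp
        ring

end Dual

theorem dual_strong_convexity_and_smoothness_general {Z : Type*} [Fintype Z]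
    (ρ : Z → ℝ) (hρ_pos : ∀ z, 0 < ρ z) (hρ_sum : ∑ z, ρ z = 1)
    (r c : Z → Bool → ℝ) (w1 w2 : Z → ℝ)
    (hw2 : ∀ z, 0 ≤ w2 z)
    (β : ℝ) (hβ : 0 < β) (C : ℝ)
    (M K : ℝ)
    (hc_bound : ∀ z a, 0 ≤ c z a ∧ c z a ≤ M)
    (hw2_bound : ∀ z, w2 z ≤ K) :
    (∀ lam : ℝ,
      β ≤ deriv (deriv (fun l => dualFun ρ r c w1 w2 β C l)) lam ∧
      deriv (deriv (fun l => dualFun ρ r c w1 w2 β C l)) lam ≤ β + M ^ 2 * K ^ 2 / β) ∧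
    StrongConvexOn Set.univ β (fun l => dualFun ρ r c w1 w2 β C l) ∧
    (∀ x y : ℝ,
      |deriv (fun l => dualFun ρ r c w1 w2 β C l) x
        - deriv (fun l => dualFun ρ r c w1 w2 β C l) y|
        ≤ (β + M ^ 2 * K ^ 2 / β) * |x - y|) := by
  have hd := hasDerivAt_dualFun r c w1 w2 β ρ C
  have hd' := hasDerivAt_dualDeriv r c w1 w2 β ρ C
  have hlow := le_dualDeriv2 r c w1 w2 β ρ (fun z => (hρ_pos z).le) hβ.le
  have hup := dualDeriv2_le r c w1 w2 β ρ (fun z => (hρ_pos z).le) hρ_sum hβ hw2 hw2_bound hc_bound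
  have hderiv : deriv (fun l => dualFun ρ r c w1 w2 β C l) = dualDeriv r c w1 w2 β ρ C :=
    funext fun l => (hd l).deriv
  refine ⟨fun l => ?_, strongConvexOn_univ_of_hasDerivAt2 hd hd' hlow, ?_⟩
  · rw [hderiv, (hd' l).deriv]
    exact ⟨hlow l, hup l⟩
  · have hL : 0 ≤ M ^ 2 * K ^ 2 / β := by positivity
    rw [hderiv]
    exact abs_sub_le_of_hasDerivAt_abs_le hd' fun l => abs_le.2 ⟨by linarith [hlow l], hup l⟩

/-- under the bounds `0 ≤ c ≤ M` and `0 ≤ w2 ≤ K`, the second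
derivative of the dual function satisfies `β ≤ d″(λ) ≤ β + M²K²/β` for every
`λ`; in particular `d` is `β`-strongly convex and `d′` is Lipschitz with
constant `β + M²K²/β`. -/
theorem dual_strong_convexity_and_smoothness {Z : Type*} [Fintype Z] [Nonempty Z]
    (ρ : Z → ℝ) (hρ_pos : ∀ z, 0 < ρ z) (hρ_sum : ∑ z, ρ z = 1)
    (r c : Z → Bool → ℝ) (w1 w2 : Z → ℝ)
    (hw1 : ∀ z, 0 ≤ w1 z) (hw2 : ∀ z, 0 ≤ w2 z)
    (β : ℝ) (hβ : 0 < β) (C : ℝ)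
    (M K : ℝ) (hM : 0 < M) (hK : 0 < K)
    (hc_bound : ∀ z a, 0 ≤ c z a ∧ c z a ≤ M)
    (hw2_bound : ∀ z, w2 z ≤ K) :
    (∀ lam : ℝ,
      β ≤ deriv (deriv (fun l => dualFun ρ r c w1 w2 β C l)) lam ∧
      deriv (deriv (fun l => dualFun ρ r c w1 w2 β C l)) lam ≤ β + M ^ 2 * K ^ 2 / β) ∧
    StrongConvexOn Set.univ β (fun l => dualFun ρ r c w1 w2 β C l) ∧
    (∀ x y : ℝ,
      |deriv (fun l => dualFun ρ r c w1 w2 β C l) x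
        - deriv (fun l => dualFun ρ r c w1 w2 β C l) y|
        ≤ (β + M ^ 2 * K ^ 2 / β) * |x - y|) :=
  dual_strong_convexity_and_smoothness_general ρ hρ_pos hρ_sum r c w1 w2 hw2 β hβ C M K hc_bound
    hw2_bound
end
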